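/- arXiv:1801.00081 — 2 statements merged into one kernel-verified Lean document; each statement's English description precedes it below -/
import Mathlib

section
/- Assume F is cooperative on (p⁻,p⁺), the bistability hypothesis holds, and DF(u) is an irreducible matrix for every u ∈ (p⁻,p⁺). Let φ and φ̃ both satisfy the traveling wave condition (A') with the same unit direction n and the same speed c, and suppose there are constants a, b ∈ ℝ with φ̃(z − a) ≼ φ(z) ≼ φ̃(z − b) for all z ∈ ℝ. Then there exists θ₀ ∈ ℝ such that φ(z) = φ̃(z − θ₀) for all z ∈ ℝ. -/
open Filter

noncomputable section

/-- The Laplacian of a scalar function on `ℝ^N`: sum of pure second partial derivatives. -/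
def lap {N : ℕ} (f : (Fin N → ℝ) → ℝ) (x : Fin N → ℝ) : ℝ :=
  ∑ i : Fin N, fderiv ℝ (fun y => fderiv ℝ f y (Pi.single i 1)) x (Pi.single i 1)

/-- Euclidean dot product on `ℝ^N`. -/
def dotp {N : ℕ} (n x : Fin N → ℝ) : ℝ := ∑ i : Fin N, n i * x i

/-- Membership in the open box `(p⁻, p⁺)`. -/
def inOpenBox {m : ℕ} (pm pp w : Fin m → ℝ) : Prop := ∀ i, pm i < w i ∧ w i < pp i

/-- `F` is cooperative on the open box `(p⁻, p⁺)`: all off-diagonal entries of the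
Jacobian are nonnegative there. -/
def CoopOn {m : ℕ} (F : (Fin m → ℝ) → Fin m → ℝ) (pm pp : Fin m → ℝ) : Prop :=
  ∀ w, inOpenBox pm pp w → ∀ k l, k ≠ l → 0 ≤ fderiv ℝ F w (Pi.single l 1) k

/-- The bistability hypothesis: `p⁺`, `p⁻` are zeros of `F`, and the Jacobian at each of them
has a negative eigenvalue `-λ±` with a positive unit eigenvector `φ±`. -/
def Bistable {m : ℕ} (F : (Fin m → ℝ) → Fin m → ℝ) (pm pp : Fin m → ℝ) : Prop :=
  F pp = 0 ∧ F pm = 0 ∧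
  ∃ lamp lamm : ℝ, 0 < lamp ∧ 0 < lamm ∧
    ∃ phip phim : Fin m → ℝ,
      (∀ l, 0 < phip l) ∧ (∀ l, 0 < phim l) ∧
      Real.sqrt (∑ l, phip l ^ 2) = 1 ∧ Real.sqrt (∑ l, phim l ^ 2) = 1 ∧
      fderiv ℝ F pp phip = (-lamp) • phip ∧
      fderiv ℝ F pm phim = (-lamm) • phim

/-- A square matrix is irreducible: there is no nonempty proper subset `Λ` of the indices
with `A k l = 0` for all `k ∈ Λ`, `l ∉ Λ`. -/
def IrredMat {m : ℕ} (A : Fin m → Fin m → ℝ) : Prop :=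
  ∀ Λ : Finset (Fin m), Λ.Nonempty → Λ ≠ Finset.univ →
    ∃ k ∈ Λ, ∃ l, l ∉ Λ ∧ A k l ≠ 0

/-- A bounded eternal solution of the cooperation-diffusion system
`∂ₜ u_l = D_l Δ u_l + f_l(u)` on `ℝ^N × ℝ`: C² in `x`, C¹ in `t`,
satisfying the system pointwise. -/
def IsEternalSol {N m : ℕ} (D : Fin m → ℝ) (F : (Fin m → ℝ) → Fin m → ℝ)
    (u : (Fin N → ℝ) → ℝ → Fin m → ℝ) : Prop :=
  (∃ C : ℝ, ∀ x t l, |u x t l| ≤ C) ∧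
  (∀ t l, ContDiff ℝ 2 (fun x => u x t l)) ∧
  (∀ x l, Differentiable ℝ (fun t => u x t l)) ∧
  (∀ x t l, deriv (fun s => u x s l) t = D l * lap (fun y => u y t l) x + F (u x t) l)

/-- Traveling-wave condition (A'): a C² profile `φ` with speed `c`, solving
`D_l φ_l'' + c φ_l' + f_l(φ) = 0`, connecting `p⁺` (at `-∞`) to `p⁻` (at `+∞`),
with `φ' ≪ 0` everywhere. -/
def IsTW {m : ℕ} (D : Fin m → ℝ) (F : (Fin m → ℝ) → Fin m → ℝ)
    (pm pp : Fin m → ℝ) (c : ℝ) (φ : ℝ → Fin m → ℝ) : Prop :=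
  (∀ l, ContDiff ℝ 2 (fun z => φ z l)) ∧
  (∀ z l, D l * deriv (deriv (fun s => φ s l)) z
      + c * deriv (fun s => φ s l) z + F (φ z) l = 0) ∧
  Tendsto φ atBot (nhds pp) ∧ Tendsto φ atTop (nhds pm) ∧
  (∀ z l, deriv (fun s => φ s l) z < 0)

/-!
Sliding method. Let `θ₀` be the least shift with `φ ≤ φ̃(· - θ₀)`; it exists because the set of
such shifts is closed, contains `b` and is bounded below by `a`. Each component of
`W = φ̃(· - θ₀) - φ ≥ 0` is a nonnegative supersolution of a linear second-order equation, so by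
the strong maximum principle it vanishes identically or nowhere. Cooperativity and irreducibility
of `DF` forbid a mixture of the two, hence `W ≡ 0` or `W ≫ 0`. In the second case `φ̃` can be slid
a little further, contradicting the minimality of `θ₀`: on a compact interval by continuity, and
on the two tails by a comparison near the stable equilibria `p±`, where the positive eigenvectors
of `DF(p±)` keep `min_l W_l / ψ_l` from reaching a negative interior minimum.
-/

open Set Metric Topology

theorem IsLocalMin.deriv_deriv_nonneg {f : ℝ → ℝ} {x : ℝ} (hmin : IsLocalMin f x)
    (hc : ContinuousAt f x) : 0 ≤ deriv (deriv f) x := by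
  by_contra! hneg
  have hmax := isLocalMax_of_deriv_deriv_neg hneg hmin.deriv_eq_zero hc
  have hconst : f =ᶠ[𝓝 x] fun _ => f x :=
    (hmax.and hmin).mono fun y hy => le_antisymm hy.1 hy.2
  have := hconst.deriv.deriv_eq
  simp only [deriv_const', deriv_const] at this
  exact hneg.ne this

theorem deriv_deriv_comp_neg (f : ℝ → ℝ) (x : ℝ) :
    deriv (deriv fun y => f (-y)) x = deriv (deriv f) (-x) := by
  have h : deriv (fun y => f (-y)) = fun y => -deriv f (-y) :=
    funext fun y => deriv_comp_neg f y
  rw [h, deriv.fun_neg, deriv_comp_neg, neg_neg]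

theorem nonpos_of_deriv_le_mul {E : ℝ → ℝ} {K a z : ℝ} (hE : Differentiable ℝ E)
    (hle : ∀ y, deriv E y ≤ K * E y) (ha : E a ≤ 0) (hz : a ≤ z) : E z ≤ 0 := by
  have := le_gronwallBound_of_liminf_deriv_right_le (δ := 0) (ε := 0)
    hE.continuous.continuousOn
    (fun y _ r hr => (hE y).hasDerivAt.hasDerivWithinAt.liminf_right_slope_le hr)
    ha (fun y _ => by simpa using hle y) z ⟨hz, le_rfl⟩
  simpa [gronwallBound_ε0_δ0] using this

theorem eq_zero_of_ode_le_of_nonneg_of_le {f : ℝ → ℝ} {d c M z₀ z : ℝ} (hd : 0 < d)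
    (hf : ContDiff ℝ 2 f) (hode : ∀ y, d * deriv (deriv f) y + c * deriv f y ≤ M * f y)
    (hnn : ∀ y, 0 ≤ f y) (hz₀ : f z₀ = 0) (hz : z₀ ≤ z) : f z = 0 := by
  set K := (|c| + |M|) / d + 1
  have hK : 1 ≤ K := by
    have : 0 ≤ (|c| + |M|) / d := by positivity
    linarith
  have hK₂ : |M| / d + 1 ≤ K - c / d := by
    have h : (|c| + |M|) / d - c / d - |M| / d = (|c| - c) / d := by ring
    have : 0 ≤ (|c| - c) / d := div_nonneg (by linarith [le_abs_self c]) hd.le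
    linarith
  have hKK : M / d ≤ (K - c / d) * K := by
    have : M / d ≤ |M| / d := div_le_div_of_nonneg_right (le_abs_self M) hd.le
    have : 0 ≤ |M| / d := by positivity
    nlinarith [mul_le_mul_of_nonneg_left hK (by linarith : 0 ≤ K - c / d)]
  -- `E = f' + K f` satisfies `E' ≤ (K - c / d) E` and `E z₀ = 0`, hence `E ≤ 0` on `[z₀, ∞)`,
  -- so `f' ≤ -K f ≤ 0` there.
  set E := fun y => deriv f y + K * f y
  have hf₁ : Differentiable ℝ f := hf.differentiable (by norm_num)
  have hE : Differentiable ℝ E := hf.differentiable_deriv_two.add (hf₁.const_mul K)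
  have hEz₀ : E z₀ = 0 := by
    have hmin : IsLocalMin f z₀ := .of_forall fun y => hz₀ ▸ hnn y
    simp [E, hmin.deriv_eq_zero, hz₀]
  have hEle : ∀ y, deriv E y ≤ (K - c / d) * E y := by
    intro y
    have hderiv : deriv E y = deriv (deriv f) y + K * deriv f y :=
      (hf.differentiable_deriv_two y).hasDerivAt.add ((hf₁ y).hasDerivAt.const_mul K) |>.deriv
    have h2 : deriv (deriv f) y ≤ M / d * f y - c / d * deriv f y := by
      have : M / d * f y - c / d * deriv f y = (M * f y - c * deriv f y) / d := by ring
      rw [this, le_div_iff₀ hd]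
      linarith [hode y]
    rw [hderiv]
    nlinarith [mul_le_mul_of_nonneg_right hKK (hnn y)]
  have hf' : ∀ y ∈ interior (Ici z₀), deriv f y ≤ 0 := fun y hy => by
    have := nonpos_of_deriv_le_mul hE hEle hEz₀.le (interior_subset hy : z₀ ≤ y)
    nlinarith [hnn y]
  have hanti := antitoneOn_of_deriv_nonpos (convex_Ici z₀) hf₁.continuous.continuousOn
    hf₁.differentiableOn hf'
  exact le_antisymm (hz₀ ▸ hanti self_mem_Ici hz hz) (hnn z)

theorem eq_zero_of_ode_le_of_nonneg {f : ℝ → ℝ} {d c M z₀ : ℝ} (hd : 0 < d)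
    (hf : ContDiff ℝ 2 f) (hode : ∀ y, d * deriv (deriv f) y + c * deriv f y ≤ M * f y)
    (hnn : ∀ y, 0 ≤ f y) (hz₀ : f z₀ = 0) (z : ℝ) : f z = 0 := by
  rcases le_total z₀ z with hz | hz
  · exact eq_zero_of_ode_le_of_nonneg_of_le hd hf hode hnn hz₀ hz
  · have hode' : ∀ y, d * deriv (deriv fun x => f (-x)) y + -c * deriv (fun x => f (-x)) y
        ≤ M * f (-y) := fun y => by
      rw [deriv_deriv_comp_neg, deriv_comp_neg]
      linarith [hode (-y)]
    simpa using eq_zero_of_ode_le_of_nonneg_of_le hd (hf.comp contDiff_neg) hode'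
      (fun y => hnn (-y)) (by simpa using hz₀) (neg_le_neg hz)

theorem exists_isMinOn_Ici_of_tendsto {g : ℝ → ℝ} {R z₀ L : ℝ} (hg : Continuous g)
    (hlim : Tendsto g atTop (𝓝 L)) (hz₀ : R ≤ z₀) (hlt : g z₀ < L) :
    ∃ z ≥ R, IsMinOn g (Ici R) z := by
  refine hg.continuousOn.exists_isMinOn' isClosed_Ici hz₀ ?_
  rw [cocompact_eq_atBot_atTop, inf_sup_right, eventually_sup]
  refine ⟨mem_inf_of_inter (Iio_mem_atBot R) (mem_principal_self (Ici R)) fun x hx => ?_, ?_⟩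
  · exact (not_le.2 (mem_Iio.1 hx.1) (mem_Ici.1 hx.2)).elim
  · exact ((hlim.eventually (lt_mem_nhds hlt)).filter_mono inf_le_left).mono fun x hx => hx.le

theorem IsCompact.eventually_forall_lt_comp_sub {ι : Type*} [Finite ι] {K : Set ℝ}
    (hK : IsCompact K) {f g : ℝ → ι → ℝ} (hf : Continuous f) (hg : Continuous g) {θ : ℝ}
    (hlt : ∀ z ∈ K, ∀ l, f z l < g (z - θ) l) :
    ∀ᶠ ε in 𝓝 0, ∀ z ∈ K, ∀ l, f z l < g (z - (θ - ε)) l := by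
  refine hK.eventually_forall_of_forall_eventually fun z hz => eventually_all.2 fun l => ?_
  refine ContinuousAt.eventually_lt (f := fun q : ℝ × ℝ => f q.2 l)
    (g := fun q => g (q.2 - (θ - q.1)) l) (by fun_prop) (by fun_prop) ?_
  simpa using hlt z hz l

theorem hasDerivAt_apply_add_smul {E ι : Type*} [NormedAddCommGroup E] [NormedSpace ℝ E]
    [Fintype ι] {G : E → ι → ℝ} {x v : E} {t : ℝ} (hG : DifferentiableAt ℝ G (x + t • v))
    (k : ι) : HasDerivAt (fun s : ℝ => G (x + s • v) k) (fderiv ℝ G (x + t • v) v k) t := by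
  have hline : HasDerivAt (fun s : ℝ => x + s • v) v t := by
    simpa using ((hasDerivAt_id t).smul_const v).const_add x
  exact hasDerivAt_pi.1 (hG.hasFDerivAt.comp_hasDerivAt t hline) k

theorem Convex.le_apply_sub_of_le_fderiv {E ι : Type*} [NormedAddCommGroup E]
    [NormedSpace ℝ E] [Fintype ι] {G : E → ι → ℝ} {s : Set E} (hs : Convex ℝ s)
    (hG : Differentiable ℝ G) {x y : E} (hx : x ∈ s) (hy : y ∈ s) {k : ι} {C : ℝ}
    (hC : ∀ w ∈ s, C ≤ fderiv ℝ G w (y - x) k) : C ≤ G y k - G x k := by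
  have hg := fun t : ℝ => hasDerivAt_apply_add_smul (x := x) (v := y - x) (t := t) (hG _) k
  have := (convex_Icc (0 : ℝ) 1).mul_sub_le_image_sub_of_le_deriv
    (fun t _ => (hg t).continuousAt.continuousWithinAt)
    (fun t _ => (hg t).differentiableAt.differentiableWithinAt)
    (fun t ht => (hg t).deriv ▸ hC _ (hs.add_smul_sub_mem hx hy (interior_subset ht)))
    0 (by simp) 1 (by simp) zero_le_one
  simpa using this

section

variable {m : ℕ}

section Cooperative

variable {F : (Fin m → ℝ) → Fin m → ℝ}

theorem fderiv_apply_le_of_offDiag_nonneg {w d h : Fin m → ℝ} {k : Fin m}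
    (hco : ∀ k l, k ≠ l → 0 ≤ fderiv ℝ F w (Pi.single l 1) k) (hdh : d ≤ h) (hk : d k = h k) :
    fderiv ℝ F w d k ≤ fderiv ℝ F w h k := by
  rw [← sub_nonneg, ← Pi.sub_apply, ← map_sub, ← Finset.univ_sum_single (h - d), map_sum,
    Finset.sum_apply]
  refine Finset.sum_nonneg fun l _ => ?_
  have hsingle : Pi.single l ((h - d) l) = (h - d) l • (Pi.single l 1 : Fin m → ℝ) := by
    rw [← Pi.single_smul', smul_eq_mul, mul_one]
  rw [hsingle, map_smul, Pi.smul_apply, smul_eq_mul]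
  rcases eq_or_ne l k with rfl | hlk
  · simp [hk]
  · exact mul_nonneg (sub_nonneg.2 (hdh l)) (hco k l hlk.symm)

variable {s : Set (Fin m → ℝ)}

theorem apply_le_apply_of_offDiag_nonneg (hs : Convex ℝ s) (hF : Differentiable ℝ F)
    (hco : ∀ w ∈ s, ∀ k l, k ≠ l → 0 ≤ fderiv ℝ F w (Pi.single l 1) k)
    {x y : Fin m → ℝ} (hx : x ∈ s) (hy : y ∈ s)
    (hxy : x ≤ y) {k : Fin m} (hk : x k = y k) : F x k ≤ F y k := by
  have := hs.le_apply_sub_of_le_fderiv hF hx hy (k := k) (C := 0) fun w hw => by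
    simpa using fderiv_apply_le_of_offDiag_nonneg (k := k) (hco w hw) (sub_nonneg.2 hxy)
      (by simp [hk])
  linarith

theorem apply_sub_apply_le_of_offDiag_nonneg (hs : Convex ℝ s) (hF : Differentiable ℝ F)
    (hco : ∀ w ∈ s, ∀ k l, k ≠ l → 0 ≤ fderiv ℝ F w (Pi.single l 1) k)
    {M : ℝ} {k : Fin m}
    (hM : ∀ w ∈ s, -M ≤ fderiv ℝ F w (Pi.single k 1) k) {x y : Fin m → ℝ} (hx : x ∈ s)
    (hy : y ∈ s) (hxy : x ≤ y) : F x k - F y k ≤ M * (y k - x k) := by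
  have hdiag : (y k - x k) • Pi.single k 1 ≤ y - x := fun j => by
    rcases eq_or_ne j k with rfl | hjk
    · simp
    · simpa [hjk] using hxy j
  have := hs.le_apply_sub_of_le_fderiv hF hx hy (C := -M * (y k - x k)) fun w hw =>
    calc -M * (y k - x k) ≤ (y k - x k) * fderiv ℝ F w (Pi.single k 1) k := by
          nlinarith [hM w hw, sub_nonneg.2 (hxy k)]
      _ = fderiv ℝ F w ((y k - x k) • Pi.single k 1) k := by simp
      _ ≤ _ := fderiv_apply_le_of_offDiag_nonneg (hco w hw) hdiag (by simp)
  linarith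

theorem mul_le_apply_sub_of_offDiag_nonneg (hs : Convex ℝ s) (hF : Differentiable ℝ F)
    (hco : ∀ w ∈ s, ∀ k l, k ≠ l → 0 ≤ fderiv ℝ F w (Pi.single l 1) k)
    {ψ : Fin m → ℝ} {ρ κ : ℝ}
    (heig : ∀ w ∈ s, fderiv ℝ F w ψ ≤ -ρ • ψ) (hκ : 0 ≤ κ) {u v : Fin m → ℝ} (hu : u ∈ s)
    (hv : v ∈ s) (hge : -(κ • ψ) ≤ v - u) {l : Fin m} (hl : v l - u l = -(κ * ψ l)) :
    ρ * κ * ψ l ≤ F v l - F u l :=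
  hs.le_apply_sub_of_le_fderiv hF hu hv fun w hw =>
    calc ρ * κ * ψ l ≤ -κ * fderiv ℝ F w ψ l := by
          have := heig w hw l
          simp only [Pi.smul_apply, smul_eq_mul] at this
          nlinarith
      _ = fderiv ℝ F w (-(κ • ψ)) l := by simp
      _ ≤ _ := fderiv_apply_le_of_offDiag_nonneg (hco w hw) hge (by simp [hl])

end Cooperative

theorem convex_setOf_inOpenBox (pm pp : Fin m → ℝ) : Convex ℝ {w | inOpenBox pm pp w} := by
  have : {w | inOpenBox pm pp w} = univ.pi fun i => Ioo (pm i) (pp i) := by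
    ext w
    simp [inOpenBox]
  exact this ▸ convex_pi fun i _ => convex_Ioo _ _

theorem inOpenBox_of_le_of_le {pm pp x y w : Fin m → ℝ} (hx : inOpenBox pm pp x)
    (hy : inOpenBox pm pp y) (hxw : x ≤ w) (hwy : w ≤ y) : inOpenBox pm pp w :=
  fun i => ⟨(hx i).1.trans_le (hxw i), (hwy i).trans_lt (hy i).2⟩

/-- By cooperativity `t ↦ f_k(x + t eₗ)` is squeezed between `f_k(x)` and `f_k(y) ≤ f_k(x)` on
`[0, y_l - x_l]`, so its derivative `∂f_k/∂u_l(x)` at `0` vanishes. -/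
theorem CoopOn.fderiv_single_eq_zero {F : (Fin m → ℝ) → Fin m → ℝ} {pm pp : Fin m → ℝ}
    (hco : CoopOn F pm pp) (hF : Differentiable ℝ F) {x y : Fin m → ℝ}
    (hx : inOpenBox pm pp x) (hy : inOpenBox pm pp y) (hxy : x ≤ y) {k l : Fin m}
    (hk : x k = y k) (hFk : F y k ≤ F x k) (hl : x l < y l) :
    fderiv ℝ F x (Pi.single l 1) k = 0 := by
  have hkl : k ≠ l := by
    rintro rfl
    exact hl.ne hk
  set T := y l - x l
  have hT : 0 < T := sub_pos.2 hl
  set g : ℝ → ℝ := fun t => F (x + t • Pi.single l 1) k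
  have hconst : EqOn g (fun _ => F x k) (Icc 0 T) := by
    intro t ht
    have hxt : x ≤ x + t • Pi.single l 1 := fun j => by
      rcases eq_or_ne j l with rfl | hjl <;> simp [*, ht.1]
    have hty : x + t • Pi.single l 1 ≤ y := fun j => by
      rcases eq_or_ne j l with rfl | hjl
      · have := ht.2
        simp only [Pi.add_apply, Pi.smul_apply, Pi.single_eq_same, smul_eq_mul, mul_one]
        linarith
      · simpa [hjl] using hxy j
    have htk : (x + t • Pi.single l 1 : Fin m → ℝ) k = x k := by simp [hkl]
    have hbox := inOpenBox_of_le_of_le hx hy hxt hty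
    have hconv := convex_setOf_inOpenBox pm pp
    exact le_antisymm
      ((apply_le_apply_of_offDiag_nonneg hconv hF hco hbox hy hty (htk.trans hk)).trans hFk)
      (apply_le_apply_of_offDiag_nonneg hconv hF hco hx hbox hxt htk.symm)
  have hderiv : HasDerivWithinAt g (fderiv ℝ F x (Pi.single l 1) k) (Icc 0 T) 0 := by
    simpa using (hasDerivAt_apply_add_smul (x := x) (v := Pi.single l 1) (t := 0)
      (hF _) k).hasDerivWithinAt
  have hzero : HasDerivWithinAt g 0 (Icc 0 T) 0 :=
    (hasDerivWithinAt_const _ _ (F x k)).congr hconst (hconst ⟨le_rfl, hT.le⟩)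
  exact (uniqueDiffOn_Icc hT 0 ⟨le_rfl, hT.le⟩).eq_deriv _ hderiv hzero

theorem exists_ball_fderiv_le_smul {F : (Fin m → ℝ) → Fin m → ℝ} (hF : ContDiff ℝ 1 F)
    {p ψ : Fin m → ℝ} {ν : ℝ} (hν : 0 < ν) (hψ : ∀ l, 0 < ψ l)
    (heig : fderiv ℝ F p ψ = (-ν) • ψ) :
    ∃ δ > 0, ∀ w ∈ ball p δ, fderiv ℝ F w ψ ≤ -(ν / 2) • ψ := by
  have hcont : Continuous fun w => fderiv ℝ F w ψ :=
    (hF.continuous_fderiv one_ne_zero).clm_apply continuous_const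
  have hp : ∀ l, fderiv ℝ F p ψ l < (-(ν / 2) • ψ) l := fun l => by
    simp only [heig, Pi.smul_apply, smul_eq_mul]
    nlinarith [hψ l]
  refine eventually_nhds_iff_ball.1 ?_
  filter_upwards [eventually_all.2 fun l =>
    ((continuous_apply l).comp hcont).continuousAt.eventually_lt continuousAt_const (hp l)]
    with w hw l
  exact (hw l).le

def SolvesProfileEq (D : Fin m → ℝ) (F : (Fin m → ℝ) → Fin m → ℝ) (c : ℝ)
    (U : ℝ → Fin m → ℝ) : Prop :=
  (∀ l, ContDiff ℝ 2 fun z => U z l) ∧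
  ∀ z l, D l * deriv (deriv fun s => U s l) z + c * deriv (fun s => U s l) z + F (U z) l = 0

namespace SolvesProfileEq

variable {D : Fin m → ℝ} {F : (Fin m → ℝ) → Fin m → ℝ} {c : ℝ} {U V : ℝ → Fin m → ℝ}
  {pm pp : Fin m → ℝ}

theorem continuous (h : SolvesProfileEq D F c U) : Continuous U :=
  continuous_pi fun l => (h.1 l).continuous

theorem comp_sub_const (h : SolvesProfileEq D F c U) (θ : ℝ) :
    SolvesProfileEq D F c fun z => U (z - θ) := by
  refine ⟨fun l => (h.1 l).comp (contDiff_id.sub contDiff_const), fun z l => ?_⟩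
  have h' : deriv (fun s => U (s - θ) l) = fun s => deriv (fun s => U s l) (s - θ) :=
    funext fun s => deriv_comp_sub_const (fun s => U s l) θ s
  rw [h', deriv_comp_sub_const (deriv fun s => U s l)]
  exact h.2 (z - θ) l

theorem comp_neg (h : SolvesProfileEq D F c U) : SolvesProfileEq D F (-c) fun z => U (-z) := by
  refine ⟨fun l => (h.1 l).comp contDiff_neg, fun z l => ?_⟩
  have h₁ := deriv_comp_neg (fun s => U s l) z
  have h₂ := deriv_deriv_comp_neg (fun s => U s l) z
  beta_reduce at h₁ h₂ ⊢
  rw [h₁, h₂]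
  linarith [h.2 (-z) l]

theorem sub_eq (hU : SolvesProfileEq D F c U) (hV : SolvesProfileEq D F c V) (z : ℝ)
    (l : Fin m) :
    D l * deriv (deriv fun s => V s l - U s l) z + c * deriv (fun s => V s l - U s l) z
      = F (U z) l - F (V z) l := by
  have hd : deriv (fun s => V s l - U s l)
      = fun s => deriv (fun s => V s l) s - deriv (fun s => U s l) s :=
    funext fun s => deriv_sub ((hV.1 l).differentiable (by norm_num) s)
      ((hU.1 l).differentiable (by norm_num) s)
  rw [hd, deriv_fun_sub ((hV.1 l).differentiable_deriv_two z)
    ((hU.1 l).differentiable_deriv_two z)]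
  linarith [hU.2 z l, hV.2 z l]

theorem apply_le_of_isLocalMin_sub (hU : SolvesProfileEq D F c U)
    (hV : SolvesProfileEq D F c V) {l : Fin m} (hD : 0 < D l) {z : ℝ}
    (hmin : IsLocalMin (fun s => V s l - U s l) z) : F (V z) l ≤ F (U z) l := by
  have h2 := hmin.deriv_deriv_nonneg ((hV.1 l).continuous.sub (hU.1 l).continuous).continuousAt
  have := hU.sub_eq hV z l
  rw [hmin.deriv_eq_zero] at this
  nlinarith [mul_nonneg hD.le h2]

theorem eq_or_lt_of_le (hU : SolvesProfileEq D F c U) (hV : SolvesProfileEq D F c V)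
    (hF : ContDiff ℝ 1 F) (hco : CoopOn F pm pp) (hUb : ∀ z, inOpenBox pm pp (U z))
    (hVb : ∀ z, inOpenBox pm pp (V z)) (hUV : ∀ z, U z ≤ V z) {k : Fin m} (hD : 0 < D k) :
    (∀ z, U z k = V z k) ∨ ∀ z, U z k < V z k := by
  by_cases h : ∃ z₀, U z₀ k = V z₀ k
  · obtain ⟨z₀, hz₀⟩ := h
    obtain ⟨M, hM⟩ := (isCompact_Icc (a := pm) (b := pp)).exists_bound_of_continuousOn
      (f := fun w => fderiv ℝ F w (Pi.single k 1) k)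
      ((continuous_apply k).comp ((hF.continuous_fderiv one_ne_zero).clm_apply
        continuous_const)).continuousOn
    have hMbox : ∀ w ∈ {w | inOpenBox pm pp w}, -M ≤ fderiv ℝ F w (Pi.single k 1) k :=
      fun w hw => neg_le_of_abs_le (hM w ⟨fun i => (hw i).1.le, fun i => (hw i).2.le⟩)
    have hode : ∀ z, D k * deriv (deriv fun s => V s k - U s k) z
        + c * deriv (fun s => V s k - U s k) z ≤ M * (V z k - U z k) := fun z => by
      rw [hU.sub_eq hV]
      exact apply_sub_apply_le_of_offDiag_nonneg (convex_setOf_inOpenBox pm pp)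
        (hF.differentiable one_ne_zero) hco hMbox (hUb z) (hVb z) (hUV z)
    refine Or.inl fun z => ?_
    have := eq_zero_of_ode_le_of_nonneg hD ((hV.1 k).sub (hU.1 k)) hode
      (fun z => sub_nonneg.2 (hUV z k)) (sub_eq_zero.2 hz₀.symm) z
    linarith
  · simp only [not_exists] at h
    exact Or.inr fun z => (hUV z k).lt_of_ne (h z)

theorem eq_or_lt_of_irreducible (hU : SolvesProfileEq D F c U) (hV : SolvesProfileEq D F c V)
    (hD : ∀ l, 0 < D l) (hF : ContDiff ℝ 1 F) (hco : CoopOn F pm pp)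
    (hirr : IrredMat fun k l => fderiv ℝ F (U 0) (Pi.single l 1) k)
    (hUb : ∀ z, inOpenBox pm pp (U z)) (hVb : ∀ z, inOpenBox pm pp (V z))
    (hUV : ∀ z, U z ≤ V z) : U = V ∨ ∀ z k, U z k < V z k := by
  classical
  have hdich k := hU.eq_or_lt_of_le hV hF hco hUb hVb hUV (hD k)
  set Λ := Finset.univ.filter fun k => ∀ z, U z k = V z k
  by_cases hne : Λ.Nonempty
  · by_cases huniv : Λ = Finset.univ
    · refine Or.inl (funext fun z => funext fun k => ?_)
      exact (Finset.mem_filter.1 (Finset.eq_univ_iff_forall.1 huniv k)).2 z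
    · obtain ⟨k, hkΛ, l, hlΛ, hkl⟩ := hirr Λ hne huniv
      have hk : ∀ z, U z k = V z k := (Finset.mem_filter.1 hkΛ).2
      have hl : U 0 l < V 0 l :=
        ((hdich l).resolve_left fun h => hlΛ (Finset.mem_filter.2 ⟨Finset.mem_univ l, h⟩)) 0
      have hFk : F (V 0) k ≤ F (U 0) k := by
        have hsub := hU.sub_eq hV 0 k
        simp only [hk, sub_self, deriv_const', deriv_const, mul_zero, add_zero] at hsub
        linarith
      exact absurd (hco.fderiv_single_eq_zero (hF.differentiable one_ne_zero) (hUb 0) (hVb 0)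
        (hUV 0) (hk 0) hFk hl) hkl
  · refine Or.inr fun z k => ((hdich k).resolve_left fun h => hne ⟨k, ?_⟩) z
    exact Finset.mem_filter.2 ⟨Finset.mem_univ k, h⟩

/-- If `V - U` dipped below `0`, the most negative value `-κ` of `min_l (V_l - U_l)/ψ_l` would be
attained at some `z₂ > R` and component `l₂`; there `V_{l₂} - U_{l₂}` has a local minimum, so
`f_{l₂}(V) ≤ f_{l₂}(U)`, whereas `V(z₂) ≥ U(z₂) - κψ` with equality in `l₂` forces
`f_{l₂}(V) - f_{l₂}(U) ≥ ρκψ_{l₂} > 0`. -/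
theorem le_of_gap_of_tendsto [Nonempty (Fin m)] (hU : SolvesProfileEq D F c U)
    (hV : SolvesProfileEq D F c V) (hD : ∀ l, 0 < D l) (hF : Differentiable ℝ F)
    (hco : CoopOn F pm pp) {p ψ : Fin m → ℝ} {ρ δ R : ℝ} (hψ : ∀ l, 0 < ψ l) (hρ : 0 < ρ)
    (heig : ∀ w ∈ ball p δ, fderiv ℝ F w ψ ≤ -ρ • ψ)
    (hUs : ∀ z ≥ R, U z ∈ ball p δ ∩ {w | inOpenBox pm pp w})
    (hVs : ∀ z ≥ R, V z ∈ ball p δ ∩ {w | inOpenBox pm pp w})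
    (hgap : ∀ l, U R l < V R l) (hlim : Tendsto (fun z => V z - U z) atTop (𝓝 0))
    {z : ℝ} (hz : R ≤ z) : U z ≤ V z := by
  by_contra hcon
  obtain ⟨lb, hlb⟩ : ∃ l, V z l < U z l := by simpa [Pi.le_def] using hcon
  set g : ℝ → ℝ := fun z => Finset.univ.inf' Finset.univ_nonempty fun l => (V z l - U z l) / ψ l
  have hgc : Continuous g := continuous_iff_continuousAt.2 fun z =>
    ContinuousAt.finset_inf'_apply _ fun l _ =>
      (((continuous_apply l).comp (hV.continuous.sub hU.continuous)).div_const _).continuousAt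
  have hglim : Tendsto g atTop (𝓝 0) := by
    have := Tendsto.finset_inf'_nhds_apply Finset.univ_nonempty
      fun l _ => (((continuous_apply l).tendsto 0).comp hlim).div_const (ψ l)
    simpa using this
  have hgz : g z < 0 := (Finset.inf'_le _ (Finset.mem_univ lb)).trans_lt
    (div_neg_of_neg_of_pos (by linarith) (hψ lb))
  have hgR : 0 < g R := (Finset.lt_inf'_iff _).2 fun l _ => div_pos (sub_pos.2 (hgap l)) (hψ l)
  obtain ⟨z₂, hz₂R, hmin⟩ := exists_isMinOn_Ici_of_tendsto hgc hglim hz hgz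
  obtain ⟨l₂, -, hl₂⟩ := Finset.exists_mem_eq_inf' Finset.univ_nonempty
    fun l => (V z₂ l - U z₂ l) / ψ l
  set κ := -g z₂
  have hmin' : ∀ y ≥ R, ∀ j, -κ ≤ (V y j - U y j) / ψ j := fun y hy j =>
    (neg_neg (g z₂)).symm ▸ (hmin hy).trans (Finset.inf'_le _ (Finset.mem_univ j))
  have hκ : 0 < κ := by linarith [show g z₂ ≤ g z from hmin hz]
  have hz₂ : R < z₂ := hz₂R.lt_of_ne fun h => by
    linarith [show g z₂ ≤ g z from hmin hz, h ▸ hgR]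
  have hlower : ∀ y ≥ R, ∀ j, -(κ * ψ j) ≤ V y j - U y j := fun y hy j => by
    have := (le_div_iff₀ (hψ j)).1 (hmin' y hy j)
    linarith
  have hat : V z₂ l₂ - U z₂ l₂ = -(κ * ψ l₂) := by
    have : g z₂ = (V z₂ l₂ - U z₂ l₂) / ψ l₂ := hl₂
    rw [show κ = -g z₂ from rfl, this, neg_mul, neg_neg, div_mul_cancel₀ _ (hψ l₂).ne']
  have hlocmin : IsLocalMin (fun s => V s l₂ - U s l₂) z₂ := by
    filter_upwards [Ioi_mem_nhds hz₂] with s hs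
    exact hat ▸ hlower s hs.le l₂
  have hle := hU.apply_le_of_isLocalMin_sub hV (hD l₂) hlocmin
  have hge := mul_le_apply_sub_of_offDiag_nonneg
    ((convex_ball p δ).inter (convex_setOf_inOpenBox pm pp)) hF (fun w hw => hco w hw.2)
    (fun w hw => heig w hw.1) hκ.le (hUs z₂ hz₂R) (hVs z₂ hz₂R)
    (fun j => by simpa using hlower z₂ hz₂R j) hat
  nlinarith [mul_pos (mul_pos hρ hκ) (hψ l₂)]

theorem eventually_le_comp_sub [Nonempty (Fin m)] (hU : SolvesProfileEq D F c U)
    (hV : SolvesProfileEq D F c V) (hD : ∀ l, 0 < D l) (hF : Differentiable ℝ F)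
    (hco : CoopOn F pm pp) {p ψ : Fin m → ℝ} {ρ δ : ℝ} (hψ : ∀ l, 0 < ψ l) (hρ : 0 < ρ)
    (hδ : 0 < δ) (heig : ∀ w ∈ ball p δ, fderiv ℝ F w ψ ≤ -ρ • ψ)
    (hUb : ∀ z, inOpenBox pm pp (U z)) (hVb : ∀ z, inOpenBox pm pp (V z))
    (hUlim : Tendsto U atTop (𝓝 p)) (hVlim : Tendsto V atTop (𝓝 p)) (θ : ℝ) :
    ∀ᶠ R in atTop, ∀ ε ∈ Icc (-1 : ℝ) 1,
      (∀ l, U R l < V (R - (θ - ε)) l) → ∀ z ≥ R, U z ≤ V (z - (θ - ε)) := by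
  have hball := ball_mem_nhds p hδ
  obtain ⟨R₀, hR₀⟩ := eventually_atTop.1 (hVlim hball)
  filter_upwards [eventually_forall_ge_atTop.2 (hUlim hball),
    eventually_ge_atTop (R₀ + θ + 1)] with R hRU hRθ ε hε hgap z hz
  have hshift : Tendsto (fun y : ℝ => y - (θ - ε)) atTop atTop :=
    tendsto_atTop_atTop.2 fun y => ⟨y + (θ - ε), fun x hx => by linarith⟩
  refine hU.le_of_gap_of_tendsto (hV.comp_sub_const _) hD hF hco hψ hρ heig
    (fun y hy => ⟨hRU y hy, hUb y⟩) (fun y hy => ⟨hR₀ _ (by linarith [hε.1]), hVb _⟩) hgap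
    ?_ hz
  simpa using (hVlim.comp hshift).sub hUlim

end SolvesProfileEq

namespace IsTW

variable {D : Fin m → ℝ} {F : (Fin m → ℝ) → Fin m → ℝ} {pm pp : Fin m → ℝ} {c : ℝ}
  {φ φt : ℝ → Fin m → ℝ}

theorem solvesProfileEq (h : IsTW D F pm pp c φ) : SolvesProfileEq D F c φ := ⟨h.1, h.2.1⟩

theorem tendsto_atTop (h : IsTW D F pm pp c φ) : Tendsto φ atTop (𝓝 pm) := h.2.2.2.1

theorem tendsto_atBot (h : IsTW D F pm pp c φ) : Tendsto φ atBot (𝓝 pp) := h.2.2.1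

theorem strictAnti (h : IsTW D F pm pp c φ) (l : Fin m) : StrictAnti fun z => φ z l :=
  strictAnti_of_deriv_neg fun z => h.2.2.2.2 z l

theorem inOpenBox_apply (h : IsTW D F pm pp c φ) (z : ℝ) : inOpenBox pm pp (φ z) := fun l =>
  ⟨((h.strictAnti l).antitone.le_of_tendsto (tendsto_pi_nhds.1 h.tendsto_atTop l) (z + 1)).trans_lt
      (h.strictAnti l (lt_add_one z)),
    (h.strictAnti l (sub_one_lt z)).trans_le
      ((h.strictAnti l).antitone.ge_of_tendsto (tendsto_pi_nhds.1 h.tendsto_atBot l) (z - 1))⟩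

theorem csInf_mem_setOf_le_comp_sub [Nonempty (Fin m)] (hφt : IsTW D F pm pp c φt)
    {a b : ℝ} (hsand : ∀ z l, φt (z - a) l ≤ φ z l ∧ φ z l ≤ φt (z - b) l) :
    BddBelow {θ | ∀ z, φ z ≤ φt (z - θ)} ∧
      sInf {θ | ∀ z, φ z ≤ φt (z - θ)} ∈ {θ | ∀ z, φ z ≤ φt (z - θ)} := by
  have hbdd : BddBelow {θ | ∀ z, φ z ≤ φt (z - θ)} := ⟨a, fun θ hθ => by
    obtain ⟨l⟩ := ‹Nonempty (Fin m)›
    have := (hφt.strictAnti l).le_iff_ge.1 ((hsand 0 l).1.trans (hθ 0 l))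
    linarith⟩
  have hclosed : IsClosed {θ | ∀ z, φ z ≤ φt (z - θ)} := by
    simp only [ofPred_forall]
    exact isClosed_iInter fun z => isClosed_le continuous_const
      (hφt.solvesProfileEq.continuous.comp (continuous_const.sub continuous_id))
  exact ⟨hbdd, hclosed.csInf_mem ⟨b, fun z l => (hsand z l).2⟩ hbdd⟩

theorem exists_lt_forall_le_comp_sub [Nonempty (Fin m)] (hφ : IsTW D F pm pp c φ)
    (hφt : IsTW D F pm pp c φt) (hD : ∀ l, 0 < D l) (hF : ContDiff ℝ 1 F)
    (hco : CoopOn F pm pp) (hbist : Bistable F pm pp) {θ : ℝ}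
    (hlt : ∀ z l, φ z l < φt (z - θ) l) : ∃ θ' < θ, ∀ z, φ z ≤ φt (z - θ') := by
  obtain ⟨-, -, νp, νm, hνp, hνm, ψp, ψm, hψp, hψm, -, -, heigp, heigm⟩ := hbist
  obtain ⟨δp, hδp, hballp⟩ := exists_ball_fderiv_le_smul hF hνp hψp heigp
  obtain ⟨δm, hδm, hballm⟩ := exists_ball_fderiv_le_smul hF hνm hψm heigm
  have hFd := hF.differentiable one_ne_zero
  have hright := hφ.solvesProfileEq.eventually_le_comp_sub hφt.solvesProfileEq hD hFd hco
    hψm (half_pos hνm) hδm hballm hφ.inOpenBox_apply hφt.inOpenBox_apply hφ.tendsto_atTop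
    hφt.tendsto_atTop θ
  -- The left tail is the right tail of the reflected profiles, which have speed `-c`.
  have hleft := hφ.solvesProfileEq.comp_neg.eventually_le_comp_sub
    hφt.solvesProfileEq.comp_neg hD hFd hco hψp (half_pos hνp) hδp hballp
    (fun z => hφ.inOpenBox_apply _) (fun z => hφt.inOpenBox_apply _)
    (hφ.tendsto_atBot.comp tendsto_neg_atTop_atBot)
    (hφt.tendsto_atBot.comp tendsto_neg_atTop_atBot) (-θ)
  obtain ⟨R, ⟨hR, hRr⟩, hRl⟩ := ((eventually_ge_atTop 0).and hright |>.and hleft).exists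
  obtain ⟨ε, hmid, hε⟩ := (((isCompact_Icc (a := -R) (b := R)).eventually_forall_lt_comp_sub
    hφ.solvesProfileEq.continuous hφt.solvesProfileEq.continuous fun z _ => hlt z).filter_mono
    nhdsWithin_le_nhds |>.and (Ioo_mem_nhdsGT one_pos)).exists
  refine ⟨θ - ε, by linarith [hε.1], fun z => ?_⟩
  rcases le_or_gt R z with hz | hz
  · exact hRr ε ⟨by linarith [hε.1], hε.2.le⟩ (hmid R ⟨by linarith, le_rfl⟩) z hz
  rcases le_or_gt z (-R) with hz' | hz'
  · have key := hRl (-ε) ⟨by linarith [hε.2], by linarith [hε.1]⟩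
      (fun l => by
        convert hmid (-R) ⟨le_rfl, by linarith⟩ l using 2
        ring_nf) (-z) (by linarith)
    convert key using 2 <;> ring_nf
  · exact fun l => (hmid z ⟨hz'.le, hz.le⟩ l).le

end IsTW

end

theorem traveling_wave_unique_up_to_shift_general
    {m : ℕ} (hm : 1 ≤ m)
    (D : Fin m → ℝ) (hD : ∀ l, 0 < D l)
    (F : (Fin m → ℝ) → Fin m → ℝ) (hFsmooth : ContDiff ℝ (⊤ : ℕ∞) F)
    (pm pp : Fin m → ℝ)
    (hcoop : CoopOn F pm pp) (hbist : Bistable F pm pp)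
    (hirr : ∀ w, inOpenBox pm pp w →
        IrredMat (fun k l => fderiv ℝ F w (Pi.single l 1) k))
    (c : ℝ)
    (φ φt : ℝ → Fin m → ℝ)
    (hφ : IsTW D F pm pp c φ) (hφt : IsTW D F pm pp c φt)
    (a b : ℝ)
    (hsand : ∀ z l, φt (z - a) l ≤ φ z l ∧ φ z l ≤ φt (z - b) l) :
    ∃ θ₀ : ℝ, ∀ z l, φ z l = φt (z - θ₀) l := by
  have : Nonempty (Fin m) := ⟨⟨0, hm⟩⟩
  have hF : ContDiff ℝ 1 F := hFsmooth.of_le (by simp)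
  obtain ⟨hbdd, hmem⟩ := hφt.csInf_mem_setOf_le_comp_sub hsand
  set θ₀ := sInf {θ | ∀ z, φ z ≤ φt (z - θ)}
  rcases hφ.solvesProfileEq.eq_or_lt_of_irreducible (hφt.solvesProfileEq.comp_sub_const θ₀)
    hD hF hcoop (hirr _ (hφ.inOpenBox_apply 0)) hφ.inOpenBox_apply
    (fun z => hφt.inOpenBox_apply _) hmem with heq | hlt
  · exact ⟨θ₀, fun z l => congrFun (congrFun heq z) l⟩
  · obtain ⟨θ', hθ', hle⟩ := hφ.exists_lt_forall_le_comp_sub hφt hD hF hcoop hbist hlt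
    exact absurd (csInf_le hbdd hle) (not_le.2 hθ')

/-- Uniqueness up to shift of traveling waves of a cooperation-diffusion system with
irreducible Jacobian: two wave profiles with the same direction and speed sandwiched
between shifts of each other coincide up to a shift. -/
theorem traveling_wave_unique_up_to_shift
    {N m : ℕ} (hN : 1 ≤ N) (hm : 1 ≤ m)
    (D : Fin m → ℝ) (hD : ∀ l, 0 < D l)
    (F : (Fin m → ℝ) → Fin m → ℝ) (hFsmooth : ContDiff ℝ (⊤ : ℕ∞) F)
    (pm pp : Fin m → ℝ) (hbox : ∀ l, pm l < pp l)
    (hcoop : CoopOn F pm pp) (hbist : Bistable F pm pp)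
    (hirr : ∀ w, inOpenBox pm pp w →
        IrredMat (fun k l => fderiv ℝ F w (Pi.single l 1) k))
    (n : Fin N → ℝ) (hn : ∑ i, n i ^ 2 = 1) (c : ℝ)
    (φ φt : ℝ → Fin m → ℝ)
    (hφ : IsTW D F pm pp c φ) (hφt : IsTW D F pm pp c φt)
    (a b : ℝ)
    (hsand : ∀ z l, φt (z - a) l ≤ φ z l ∧ φ z l ≤ φt (z - b) l) :
    ∃ θ₀ : ℝ, ∀ z l, φ z l = φt (z - θ₀) l :=
  traveling_wave_unique_up_to_shift_general hm D hD F hFsmooth pm pp hcoop hbist hirr c φ φt hφ hφt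
    a b hsand
end
end

section
/- Let F : ℝ^m → ℝ^m be smooth, p⁻ ≪ p⁺ in ℝ^m, and suppose F(p⁺) = 0 and DF(p⁺)φ⁺ = −λ₊ φ⁺ for some constant λ₊ > 0 and a unit vector φ⁺ ≫ 0. Let K := max{1, sup_{w ∈ [p⁻,p⁺]} |D²F(w)|} and let δ > 0 satisfy δ·K < min_{1≤l≤m} λ₊ φ_l⁺ and δ·φ_l⁺ < p_l⁺ − p_l⁻ for every l. Then for every w ∈ ℝ^m with p⁺ − (δ/2)φ⁺ ≼ w ≼ p⁺ and every ε ∈ [0, δ/2], one has F(w) ≼ F(w − ε φ⁺). -/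
/-!
Along the path `t ↦ w - t φ⁺` the derivative of `F_l` is `-(DF(w - t φ⁺) φ⁺)_l`, so it suffices
that `DF(v) φ⁺ ≪ 0` on the slab `p⁺ - δ φ⁺ ≼ v ≼ p⁺`. At `v = p⁺` this vector is `-λ₊ φ⁺`. The
slab lies in the box, and `|v - p⁺| ≤ δ`, so by the mean value theorem and Cauchy–Schwarz against
the Frobenius norm of `D²F`, each component of `DF(·) φ⁺` moves by at most `δ K < λ₊ φ⁺_l`
between `p⁺` and `v`.
-/

noncomputable section

/-- Second partial derivative `∂²f_l/∂u_j∂u_k` of `F : ℝ^m → ℝ^m` at `w`. -/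
def pd2 {m : ℕ} (F : (Fin m → ℝ) → Fin m → ℝ) (w : Fin m → ℝ) (j k l : Fin m) : ℝ :=
  fderiv ℝ (fun v => fderiv ℝ F v (Pi.single k 1) l) w (Pi.single j 1)

/-- Frobenius (Euclidean) norm of the full second derivative of `F` at `w`. -/
def frobD2 {m : ℕ} (F : (Fin m → ℝ) → Fin m → ℝ) (w : Fin m → ℝ) : ℝ :=
  Real.sqrt (∑ l, ∑ j, ∑ k, (pd2 F w j k l) ^ 2)

/-- The closed box `[p⁻, p⁺]` in `ℝ^m`. -/
def closedBox {m : ℕ} (pm pp : Fin m → ℝ) : Set (Fin m → ℝ) :=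
  {w | ∀ i, pm i ≤ w i ∧ w i ≤ pp i}

theorem ContinuousLinearMap.apply_eq_sum_smul_single {ι E : Type*} [Fintype ι] [DecidableEq ι]
    [AddCommGroup E] [Module ℝ E] [TopologicalSpace E]
    (L : (ι → ℝ) →L[ℝ] E) (x : ι → ℝ) :
    L x = ∑ i, x i • L (Pi.single i 1) := by
  conv_lhs => rw [← Finset.univ_sum_single x, map_sum]
  simp only [← map_smul, ← Pi.single_smul, smul_eq_mul, mul_one]

theorem abs_sum_mul_le_sqrt_mul_sqrt {ι : Type*} (s : Finset ι) (f g : ι → ℝ) :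
    |∑ i ∈ s, f i * g i| ≤ √(∑ i ∈ s, f i ^ 2) * √(∑ i ∈ s, g i ^ 2) := by
  rw [← Real.sqrt_mul (Finset.sum_nonneg fun _ _ => sq_nonneg _)]
  exact Real.abs_le_sqrt (Finset.sum_mul_sq_le_sq_mul_sq s f g)

theorem abs_sum_sum_mul_le {ι κ : Type*} [Fintype ι] [Fintype κ]
    (x : ι → ℝ) (y : κ → ℝ) (a : ι → κ → ℝ) :
    |∑ i, ∑ k, x i * y k * a i k|
      ≤ √(∑ i, x i ^ 2) * √(∑ k, y k ^ 2) * √(∑ i, ∑ k, a i k ^ 2) := by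
  have hxy : ∑ p : ι × κ, (x p.1 * y p.2) ^ 2 = (∑ i, x i ^ 2) * ∑ k, y k ^ 2 := by
    simp only [Fintype.sum_prod_type, mul_pow, Finset.sum_mul_sum]
  calc |∑ i, ∑ k, x i * y k * a i k| = |∑ p : ι × κ, x p.1 * y p.2 * a p.1 p.2| := by
        rw [Fintype.sum_prod_type]
    _ ≤ √(∑ p : ι × κ, (x p.1 * y p.2) ^ 2) * √(∑ p : ι × κ, a p.1 p.2 ^ 2) :=
        abs_sum_mul_le_sqrt_mul_sqrt _ _ _
    _ = _ := by
        rw [hxy, Real.sqrt_mul (Finset.sum_nonneg fun _ _ => sq_nonneg _), Fintype.sum_prod_type]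

section SecondDerivative

variable {m : ℕ} {F : (Fin m → ℝ) → Fin m → ℝ}

theorem contDiff_fderiv_apply_apply (hF : ContDiff ℝ 2 F) (ψ : Fin m → ℝ) (l : Fin m) :
    ContDiff ℝ 1 (fun v => fderiv ℝ F v ψ l) :=
  (contDiff_apply ℝ ℝ l).comp ((hF.fderiv_right le_rfl).clm_apply contDiff_const)

theorem fderiv_fderiv_apply_apply (hF : ContDiff ℝ 2 F) (ψ : Fin m → ℝ) (l : Fin m)
    (x χ : Fin m → ℝ) :
    fderiv ℝ (fun v => fderiv ℝ F v ψ l) x χ = ∑ j, ∑ k, χ j * ψ k * pd2 F x j k l := by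
  have hdiff (k : Fin m) : DifferentiableAt ℝ (fun v => fderiv ℝ F v (Pi.single k 1) l) x :=
    (contDiff_fderiv_apply_apply hF _ l).differentiable one_ne_zero x
  have hsum : (fun v => fderiv ℝ F v ψ l)
      = fun v => ∑ k, ψ k * fderiv ℝ F v (Pi.single k 1) l := by
    funext v
    rw [(fderiv ℝ F v).apply_eq_sum_smul_single ψ]
    simp [Finset.sum_apply]
  rw [hsum, fderiv_fun_sum fun k _ => (hdiff k).const_mul (ψ k), _root_.sum_apply,
    Finset.sum_comm]
  refine Finset.sum_congr rfl fun k _ => ?_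
  rw [fderiv_const_mul (hdiff k), _root_.smul_apply, smul_eq_mul,
    ContinuousLinearMap.apply_eq_sum_smul_single _ χ, Finset.mul_sum]
  refine Finset.sum_congr rfl fun j _ => ?_
  rw [pd2, smul_eq_mul]
  ring

theorem abs_fderiv_fderiv_apply_apply_le (hF : ContDiff ℝ 2 F) (ψ : Fin m → ℝ) (l : Fin m)
    (x χ : Fin m → ℝ) :
    |fderiv ℝ (fun v => fderiv ℝ F v ψ l) x χ|
      ≤ √(∑ j, χ j ^ 2) * √(∑ k, ψ k ^ 2) * frobD2 F x := by
  rw [fderiv_fderiv_apply_apply hF]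
  refine (abs_sum_sum_mul_le χ ψ _).trans ?_
  gcongr
  exact Real.sqrt_le_sqrt <| Finset.single_le_sum (f := fun l => ∑ j, ∑ k, pd2 F x j k l ^ 2)
    (fun _ _ => by positivity) (Finset.mem_univ l)

theorem abs_fderiv_apply_apply_sub_le (hF : ContDiff ℝ 2 F) (ψ : Fin m → ℝ) (l : Fin m)
    {a b : Fin m → ℝ} {C : ℝ} (hC : ∀ x ∈ segment ℝ a b, frobD2 F x ≤ C) :
    |fderiv ℝ F b ψ l - fderiv ℝ F a ψ l|
      ≤ √(∑ j, (b j - a j) ^ 2) * √(∑ k, ψ k ^ 2) * C := by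
  set g := fun v => fderiv ℝ F v ψ l
  have hg : Differentiable ℝ g := (contDiff_fderiv_apply_apply hF ψ l).differentiable one_ne_zero
  have hpath (s : ℝ) : HasDerivAt (fun s : ℝ => g (a + s • (b - a)))
      (fderiv ℝ g (a + s • (b - a)) (b - a)) s := by
    refine (hg _).hasFDerivAt.comp_hasDerivAt s ?_
    simpa using ((hasDerivAt_id s).smul_const (b - a)).const_add a
  have hmvt := norm_image_sub_le_of_norm_deriv_le_segment_01' (f := fun s => g (a + s • (b - a)))
    (C := √(∑ j, (b j - a j) ^ 2) * √(∑ k, ψ k ^ 2) * C)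
    (fun s _ => (hpath s).hasDerivWithinAt) fun s hs => by
      rw [Real.norm_eq_abs]
      refine (abs_fderiv_fderiv_apply_apply_le hF ψ l _ _).trans ?_
      have hmem : a + s • (b - a) ∈ segment ℝ a b :=
        segment_eq_image' ℝ a b ▸ ⟨s, Set.Ico_subset_Icc_self hs, rfl⟩
      simp only [Pi.sub_apply]
      gcongr
      exact hC _ hmem
  simpa [g] using hmvt

theorem continuous_frobD2 (hF : ContDiff ℝ 2 F) : Continuous (frobD2 F) := by
  refine Real.continuous_sqrt.comp (continuous_finsetSum _ fun l _ =>
    continuous_finsetSum _ fun j _ => continuous_finsetSum _ fun k _ => ?_)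
  exact (((contDiff_fderiv_apply_apply hF _ l).continuous_fderiv one_ne_zero).clm_apply
    continuous_const).pow 2

end SecondDerivative

theorem closedBox_eq_Icc {m : ℕ} (pm pp : Fin m → ℝ) : closedBox pm pp = Set.Icc pm pp := by
  ext
  simp [closedBox, Pi.le_def, forall_and]

theorem frobD2_le_sSup_of_mem_closedBox {m : ℕ} {F : (Fin m → ℝ) → Fin m → ℝ} (hF : ContDiff ℝ 2 F)
    {pm pp x : Fin m → ℝ} (hx : x ∈ closedBox pm pp) :
    frobD2 F x ≤ sSup {r : ℝ | ∃ w ∈ closedBox pm pp, r = frobD2 F w} := by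
  have himage : {r : ℝ | ∃ w ∈ closedBox pm pp, r = frobD2 F w} = frobD2 F '' Set.Icc pm pp := by
    ext
    simp [closedBox_eq_Icc, eq_comm]
  rw [himage]
  exact le_csSup (isCompact_Icc.image (continuous_frobD2 hF)).bddAbove
    (Set.mem_image_of_mem _ (closedBox_eq_Icc pm pp ▸ hx))

theorem fderiv_apply_eigvec_neg_of_near {m : ℕ} {F : (Fin m → ℝ) → Fin m → ℝ} (hF : ContDiff ℝ 2 F)
    {p φ v : Fin m → ℝ} {lam K δ : ℝ} (hunit : √(∑ l, φ l ^ 2) = 1)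
    (heig : fderiv ℝ F p φ = (-lam) • φ) (hK : ∀ x ∈ segment ℝ p v, frobD2 F x ≤ K)
    (hδ : 0 ≤ δ) (hδK : ∀ l, δ * K < lam * φ l) (hv : ∀ j, |v j - p j| ≤ δ * φ j) (l : Fin m) :
    fderiv ℝ F v φ l < 0 := by
  have hK0 : 0 ≤ K := (Real.sqrt_nonneg _).trans (hK p (left_mem_segment ℝ p v))
  have hdist : √(∑ j, (v j - p j) ^ 2) ≤ δ :=
    calc √(∑ j, (v j - p j) ^ 2) ≤ √(∑ j, (δ * φ j) ^ 2) :=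
          Real.sqrt_le_sqrt <| Finset.sum_le_sum fun j _ => sq_le_sq' (abs_le.mp (hv j)).1
            (abs_le.mp (hv j)).2
      _ = δ * √(∑ j, φ j ^ 2) := by
          simp only [mul_pow, ← Finset.mul_sum, Real.sqrt_mul (sq_nonneg δ), Real.sqrt_sq hδ]
      _ = δ := by rw [hunit, mul_one]
  have hchange := (abs_le.mp (abs_fderiv_apply_apply_sub_le hF φ l hK)).2
  rw [hunit, mul_one] at hchange
  have hp : fderiv ℝ F p φ l = -(lam * φ l) := by simp [heig]
  nlinarith [mul_le_mul_of_nonneg_right hdist hK0, hδK l]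

theorem apply_le_apply_sub_smul_of_fderiv_nonpos {E ι : Type*} [NormedAddCommGroup E]
    [NormedSpace ℝ E] [Fintype ι] {F : E → ι → ℝ} (hF : Differentiable ℝ F) {w d : E} {ε : ℝ}
    (hε : 0 ≤ ε) (l : ι) (h : ∀ t ∈ Set.Icc 0 ε, fderiv ℝ F (w - t • d) d l ≤ 0) :
    F w l ≤ F (w - ε • d) l := by
  have hderiv (t : ℝ) :
      HasDerivAt (fun t => F (w - t • d) l) (-fderiv ℝ F (w - t • d) d l) t := by
    have hpath : HasDerivAt (fun t : ℝ => w - t • d) (-d) t := by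
      simpa using ((hasDerivAt_id t).smul_const d).const_sub w
    simpa using hasDerivAt_pi.mp ((hF _).hasFDerivAt.comp_hasDerivAt t hpath) l
  have hmono := monotoneOn_of_hasDerivWithinAt_nonneg (convex_Icc 0 ε)
    (fun t _ => (hderiv t).continuousAt.continuousWithinAt) (fun t _ => (hderiv t).hasDerivWithinAt)
    fun t ht => neg_nonneg.mpr (h t (interior_subset ht))
  simpa using hmono (Set.left_mem_Icc.mpr hε) (Set.right_mem_Icc.mpr hε) hε

theorem F_le_F_sub_smul_eigvec_near_pplus_general
    {m : ℕ}
    (F : (Fin m → ℝ) → Fin m → ℝ) (hF : ContDiff ℝ (⊤ : ℕ∞) F)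
    (pm pp : Fin m → ℝ)
    (lamp : ℝ)
    (phip : Fin m → ℝ) (hphip : ∀ l, 0 < phip l)
    (hunit : Real.sqrt (∑ l, phip l ^ 2) = 1)
    (heig : fderiv ℝ F pp phip = (-lamp) • phip)
    (K : ℝ)
    (hK : K = max 1 (sSup {r : ℝ | ∃ w ∈ closedBox pm pp, r = frobD2 F w}))
    (δ : ℝ) (hδ : 0 < δ)
    (hδ1 : ∀ l, δ * K < lamp * phip l)
    (hδ2 : ∀ l, δ * phip l < pp l - pm l) :
    ∀ w : Fin m → ℝ, (∀ l, pp l - (δ / 2) * phip l ≤ w l ∧ w l ≤ pp l) →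
      ∀ ε : ℝ, 0 ≤ ε → ε ≤ δ / 2 → ∀ l, F w l ≤ F (w - ε • phip) l := by
  intro w hw ε hε0 hεδ l
  have hF2 : ContDiff ℝ 2 F := hF.of_le (WithTop.coe_le_coe.mpr le_top)
  have hδφ (j : Fin m) : 0 < δ * phip j := mul_pos hδ (hphip j)
  have hpp_mem : pp ∈ closedBox pm pp := fun j => ⟨by linarith [hδ2 j, hδφ j], le_rfl⟩
  refine apply_le_apply_sub_smul_of_fderiv_nonpos (hF2.differentiable two_ne_zero) hε0 l
    fun t ht => ?_
  have hnear (j : Fin m) : pp j - δ * phip j ≤ (w - t • phip) j ∧ (w - t • phip) j ≤ pp j := by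
    simp only [Pi.sub_apply, Pi.smul_apply, smul_eq_mul]
    constructor <;> nlinarith [hw j, ht.1, ht.2, hphip j]
  have hv_mem : w - t • phip ∈ closedBox pm pp := fun j =>
    ⟨by linarith [hnear j, hδ2 j], (hnear j).2⟩
  have hseg (x : Fin m → ℝ) (hx : x ∈ segment ℝ pp (w - t • phip)) : frobD2 F x ≤ K :=
    hK ▸ (frobD2_le_sSup_of_mem_closedBox hF2 <|
      (closedBox_eq_Icc pm pp ▸ convex_Icc pm pp).segment_subset hpp_mem hv_mem hx).trans
        (le_max_right _ _)
  exact (fderiv_apply_eigvec_neg_of_near hF2 hunit heig hseg hδ.le hδ1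
    (fun j => abs_le.mpr ⟨by linarith [hnear j], by linarith [hnear j, hδφ j]⟩) l).le

/-- Near the stable equilibrium `p⁺`, shifting down along the positive eigenvector `φ⁺`
increases `F` componentwise. -/
theorem F_le_F_sub_smul_eigvec_near_pplus
    {m : ℕ} (hm : 1 ≤ m)
    (F : (Fin m → ℝ) → Fin m → ℝ) (hF : ContDiff ℝ (⊤ : ℕ∞) F)
    (pm pp : Fin m → ℝ) (hbox : ∀ l, pm l < pp l)
    (hFpp : F pp = 0)
    (lamp : ℝ) (hlamp : 0 < lamp)
    (phip : Fin m → ℝ) (hphip : ∀ l, 0 < phip l)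
    (hunit : Real.sqrt (∑ l, phip l ^ 2) = 1)
    (heig : fderiv ℝ F pp phip = (-lamp) • phip)
    (K : ℝ)
    (hK : K = max 1 (sSup {r : ℝ | ∃ w ∈ closedBox pm pp, r = frobD2 F w}))
    (δ : ℝ) (hδ : 0 < δ)
    (hδ1 : ∀ l, δ * K < lamp * phip l)
    (hδ2 : ∀ l, δ * phip l < pp l - pm l) :
    ∀ w : Fin m → ℝ, (∀ l, pp l - (δ / 2) * phip l ≤ w l ∧ w l ≤ pp l) →
      ∀ ε : ℝ, 0 ≤ ε → ε ≤ δ / 2 → ∀ l, F w l ≤ F (w - ε • phip) l :=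
  F_le_F_sub_smul_eigvec_near_pplus_general F hF pm pp lamp phip hphip hunit heig K hK δ hδ hδ1 hδ2
end
end
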